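/- Let d ≥ 1, let Ω ⊂ ℝ^d be a bounded C² domain with outward unit normal ν, let β > 0, and let v : Ω → ℝ^d be a bounded measurable vector field. If (λ, φ) is a Robin eigenpair for (Ω, v, β), then λ > 0. -/

import Mathlib

open MeasureTheory Metric Filter
open scoped RealInnerProductSpace Topology

noncomputable section

abbrev Euc (d : ℕ) := EuclideanSpace ℝ (Fin d)

variable {d : ℕ}

/-- The Laplacian of `f : Euc d → ℝ`, as the sum of the second derivatives in the
coordinate directions. -/
def lap (f : Euc d → ℝ) (x : Euc d) : ℝ :=
  ∑ i : Fin d,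
    fderiv ℝ (fun y => fderiv ℝ f y (EuclideanSpace.single i 1)) x (EuclideanSpace.single i 1)

/-- `Ω ⊂ ℝ^d` is a bounded `C²` domain with outward unit normal `ν`. -/
def IsBoundedC2Domain (Ω : Set (Euc d)) (ν : Euc d → Euc d) : Prop :=
  Ω.Nonempty ∧ IsOpen Ω ∧ Bornology.IsBounded Ω ∧ IsConnected Ω ∧
    ∀ x ∈ frontier Ω, ∃ r : ℝ, 0 < r ∧ ∃ Φ : Euc d → ℝ, ContDiff ℝ 2 Φ ∧
      (∀ y ∈ ball x r, gradient Φ y ≠ 0) ∧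
      (Ω ∩ ball x r = {y | y ∈ ball x r ∧ Φ y < 0}) ∧
      (frontier Ω ∩ ball x r = {y | y ∈ ball x r ∧ Φ y = 0}) ∧
      (∀ y ∈ frontier Ω ∩ ball x r, ν y = ‖gradient Φ y‖⁻¹ • gradient Φ y)

/-- `G` is a continuous extension to the closure of `Ω` of the gradient of `φ`. -/
def GradExt (Ω : Set (Euc d)) (φ : Euc d → ℝ) (G : Euc d → Euc d) : Prop :=
  ContinuousOn G (closure Ω) ∧ ∀ x ∈ Ω, G x = gradient φ x

/-- `(lam, φ)` is a Robin eigenpair for `(Ω, v, β)`, where `ν` is the outward unit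
normal of `Ω`. -/
def IsRobinEigenpair (Ω : Set (Euc d)) (ν v : Euc d → Euc d) (β lam : ℝ)
    (φ : Euc d → ℝ) : Prop :=
  ContinuousOn φ (closure Ω) ∧ ContDiffOn ℝ 2 φ Ω ∧
    (∀ x ∈ Ω, 0 < φ x) ∧
    (∀ x ∈ Ω, -lap φ x + ⟪v x, gradient φ x⟫ = lam * φ x) ∧
    ∃ G : Euc d → Euc d, GradExt Ω φ G ∧
      ∀ x ∈ frontier Ω, ⟪G x, ν x⟫ + β * φ x = 0

/-- `(μ, ψ)` is a Dirichlet eigenpair for `(Ω, v)`. -/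
def IsDirichletEigenpair (Ω : Set (Euc d)) (v : Euc d → Euc d) (μ : ℝ)
    (ψ : Euc d → ℝ) : Prop :=
  ContinuousOn ψ (closure Ω) ∧ ContDiffOn ℝ 2 ψ Ω ∧
    (∀ x ∈ Ω, 0 < ψ x) ∧ (∀ x ∈ frontier Ω, ψ x = 0) ∧
    (∀ x ∈ Ω, -lap ψ x + ⟪v x, gradient ψ x⟫ = μ * ψ x)

/-- The radial unit vector field `e_r(x) = x / |x|` (with `e_r(0) = 0`). -/
def er (x : Euc d) : Euc d := ‖x‖⁻¹ • x

/-- The supremum of `φ` over the closure of `Ω` equals `1`. -/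
def SupOne (Ω : Set (Euc d)) (φ : Euc d → ℝ) : Prop :=
  sSup (φ '' closure Ω) = 1

/-- The maximum of `φ` over the closure of `Ω` equals `1`. -/
def MaxOne (Ω : Set (Euc d)) (φ : Euc d → ℝ) : Prop :=
  (∀ x ∈ closure Ω, φ x ≤ 1) ∧ ∃ x ∈ closure Ω, φ x = 1

/-!
If `lam ≤ 0` then `φ` is a subsolution, `-Δφ + ⟪v, ∇φ⟫ ≤ 0`. Adding `δ g` with the barrier
`g x = exp (⟪e, x⟫ + c)`, `‖e‖ > sup ‖v‖`, `g ≤ 1` on `closure Ω`, gives a strict subsolution `u`,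
which has no interior maximum since there `Δu ≤ 0` and `∇u = 0`. At a boundary maximum `z` the
outward normal derivative of `u` is nonnegative, and the Robin condition turns this into
`β φ z ≤ δ ‖e‖`, while maximality of `u` gives `φ x₀ < φ z + δ` for `x₀ ∈ Ω`. Together they force
`β φ x₀ < δ (‖e‖ + β)`, which fails for small `δ`.
-/

open Set Laplacian

theorem IsLocalMax.deriv_deriv_nonpos {f : ℝ → ℝ} {a : ℝ} (h : IsLocalMax f a)
    (hf : ContinuousAt f a) : deriv (deriv f) a ≤ 0 := by
  by_contra! hpos
  -- a positive second derivative would also make `a` a local minimum, so `f` is locally constant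
  have hmin := isLocalMin_of_deriv_deriv_pos hpos h.deriv_eq_zero hf
  have hconst : f =ᶠ[𝓝 a] fun _ => f a := (h.and hmin).mono fun _ hx => le_antisymm hx.1 hx.2
  have hderiv : deriv f =ᶠ[𝓝 a] fun _ => 0 :=
    hconst.eventuallyEq_nhds.mono fun _ hx => by rw [hx.deriv_eq, deriv_const]
  rw [hderiv.deriv_eq, deriv_const] at hpos
  exact lt_irrefl _ hpos

theorem IsLocalMax.fderiv_fderiv_apply_self_nonpos {E : Type*} [NormedAddCommGroup E]
    [NormedSpace ℝ E] {f : E → ℝ} {x : E} (h : IsLocalMax f x) (hf : ContDiffAt ℝ 2 f x)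
    (w : E) : fderiv ℝ (fderiv ℝ f) x w w ≤ 0 := by
  set L : ℝ → E := fun t => x + t • w
  have hL : ∀ t, HasDerivAt L w t := fun t => by
    simpa [L] using ((hasDerivAt_id t).smul_const w).const_add x
  have hL0 : L 0 = x := by simp [L]
  have hdiff : ∀ᶠ t in 𝓝 (0 : ℝ), DifferentiableAt ℝ f (L t) :=
    (hL 0).continuousAt.tendsto.eventually <| hL0 ▸
      (hf.eventually (by simp)).mono fun _ hy => hy.differentiableAt (by norm_num)
  have hderiv : deriv (f ∘ L) =ᶠ[𝓝 0] fun t => fderiv ℝ f (L t) w :=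
    hdiff.mono fun t ht => (ht.hasFDerivAt.comp_hasDerivAt t (hL t)).deriv
  have hdf : DifferentiableAt ℝ (fderiv ℝ f) (L 0) :=
    hL0 ▸ (hf.fderiv_right (m := 1) (by norm_num)).differentiableAt (by norm_num)
  have hsecond : HasDerivAt (fun t => fderiv ℝ f (L t) w) (fderiv ℝ (fderiv ℝ f) x w w) 0 := by
    have := (hdf.hasFDerivAt.comp_hasDerivAt 0 (hL 0)).clm_apply (hasDerivAt_const 0 w)
    simpa [hL0] using this
  have hmax : IsLocalMax (f ∘ L) 0 := (hL0 ▸ h).comp_continuous (hL 0).continuousAt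
  calc fderiv ℝ (fderiv ℝ f) x w w = deriv (deriv (f ∘ L)) 0 := by
        rw [hderiv.deriv_eq, hsecond.deriv]
    _ ≤ 0 := hmax.deriv_deriv_nonpos ((hL0 ▸ hf.continuousAt).comp (hL 0).continuousAt)

section InnerProductSpace

variable {E : Type*} [NormedAddCommGroup E] [InnerProductSpace ℝ E]

theorem IsLocalMax.laplacian_nonpos [FiniteDimensional ℝ E] {f : E → ℝ} {x : E}
    (h : IsLocalMax f x) (hf : ContDiffAt ℝ 2 f x) : Δ f x ≤ 0 := by
  rw [InnerProductSpace.laplacian_eq_iteratedFDeriv_stdOrthonormalBasis]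
  exact Finset.sum_nonpos fun i _ => by
    simpa [iteratedFDeriv_two_apply] using h.fderiv_fderiv_apply_self_nonpos hf _

variable [CompleteSpace E]

theorem IsLocalMax.gradient_eq_zero {f : E → ℝ} {x : E} (h : IsLocalMax f x) :
    gradient f x = 0 := by
  rw [gradient, h.fderiv_eq_zero, map_zero]

theorem gradient_add_smul {f g : E → ℝ} {x : E} (hf : DifferentiableAt ℝ f x)
    (hg : DifferentiableAt ℝ g x) (c : ℝ) :
    gradient (f + c • g) x = gradient f x + c • gradient g x := by
  simp only [gradient, fderiv_add hf (hg.const_smul c), fderiv_const_smul hg, map_add, map_smul]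

theorem neg_laplacian_add_inner_gradient_add_smul [FiniteDimensional ℝ E] {f g : E → ℝ} {x : E}
    (hf : ContDiffAt ℝ 2 f x) (hg : ContDiffAt ℝ 2 g x) (c : ℝ) (w : E) :
    -Δ (f + c • g) x + ⟪w, gradient (f + c • g) x⟫ =
      (-Δ f x + ⟪w, gradient f x⟫) + c * (-Δ g x + ⟪w, gradient g x⟫) := by
  rw [hf.laplacian_add (f₂ := c • g) (hg.const_smul c), InnerProductSpace.laplacian_smul c hg,
    gradient_add_smul (hf.differentiableAt (by norm_num)) (hg.differentiableAt (by norm_num)),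
    inner_add_right, real_inner_smul_right, smul_eq_mul]
  ring

theorem IsMaxOn.inner_nonneg_of_hasGradientAt {s : Set E} {u : E → ℝ} {G : E → E} {y n : E}
    (hmax : IsMaxOn u s y) (hgrad : ∀ z ∈ s, HasGradientAt u (G z) z)
    (hu : ContinuousWithinAt u s y) (hG : ContinuousWithinAt G s y)
    (hseg : ∀ᶠ t in 𝓝[>] (0 : ℝ), y - t • n ∈ s) : 0 ≤ ⟪G y, n⟫ := by
  set L : ℝ → E := fun t => y - t • n
  have hL : ∀ t, HasDerivAt L (-n) t := fun t => by
    simpa [L] using ((hasDerivAt_id t).smul_const n).const_sub y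
  have hL0 : L 0 = y := by simp [L]
  have hLs : Tendsto L (𝓝[>] 0) (𝓝[s] y) :=
    tendsto_nhdsWithin_iff.2 ⟨hL0 ▸ (hL 0).continuousAt.tendsto.mono_left nhdsWithin_le_nhds, hseg⟩
  have hderiv : ∀ t ∈ L ⁻¹' s, HasDerivAt (u ∘ L) (-⟪G (L t), n⟫) t := fun t ht => by
    simpa using (hgrad _ ht).hasFDerivAt.comp_hasDerivAt t (hL t)
  have hlim : Tendsto (fun t => deriv (u ∘ L) t) (𝓝[>] 0) (𝓝 (-⟪G y, n⟫)) := by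
    refine (((hG.tendsto.comp hLs).inner tendsto_const_nhds).neg).congr' ?_
    filter_upwards [hseg] with t ht
    exact (hderiv t ht).deriv.symm
  have hright : HasDerivWithinAt (u ∘ L) (-⟪G y, n⟫) (Ici 0) 0 :=
    hasDerivWithinAt_Ici_of_tendsto_deriv
      (fun t ht => (hderiv t ht).differentiableAt.differentiableWithinAt)
      (hu.comp_of_eq (hL 0).continuousAt.continuousWithinAt (fun _ ht => ht) hL0) hseg hlim
  have hlocmax : IsLocalMaxOn (u ∘ L) (Ioi 0) 0 := by
    filter_upwards [hseg] with t ht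
    simpa [hL0] using hmax ht
  have := hlocmax.hasFDerivWithinAt_nonpos (hright.mono Ioi_subset_Ici_self).hasFDerivWithinAt
    (one_mem_posTangentConeAt_iff_frequently.2 eventually_mem_nhdsWithin.frequently)
  simpa using this

end InnerProductSpace

section ExpInner

variable {E : Type*} [NormedAddCommGroup E] [InnerProductSpace ℝ E]

def expInner (e : E) (c : ℝ) (x : E) : ℝ := Real.exp (⟪e, x⟫ + c)

variable (e : E) (c : ℝ)

theorem expInner_pos (x : E) : 0 < expInner e c x := Real.exp_pos _

theorem contDiff_expInner {n : WithTop ℕ∞} : ContDiff ℝ n (expInner e c) :=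
  Real.contDiff_exp.comp ((contDiff_const.inner ℝ contDiff_id).add contDiff_const)

theorem hasFDerivAt_expInner (x : E) :
    HasFDerivAt (expInner e c) (expInner e c x • innerSL ℝ e) x :=
  (Real.hasDerivAt_exp _).comp_hasFDerivAt x ((innerSL ℝ e).hasFDerivAt.add_const c)

theorem gradient_expInner [CompleteSpace E] (x : E) :
    gradient (expInner e c) x = expInner e c x • e := by
  have hdual :
      InnerProductSpace.toDual ℝ E (expInner e c x • e) = expInner e c x • innerSL ℝ e := by
    ext y
    simp
  refine HasGradientAt.gradient ?_
  rw [hasGradientAt_iff_hasFDerivAt, hdual]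
  exact hasFDerivAt_expInner e c x

theorem laplacian_expInner [FiniteDimensional ℝ E] (x : E) :
    Δ (expInner e c) x = ‖e‖ ^ 2 * expInner e c x := by
  have hfderiv : fderiv ℝ (expInner e c) = fun y => expInner e c y • innerSL ℝ e :=
    funext fun y => (hasFDerivAt_expInner e c y).fderiv
  rw [InnerProductSpace.laplacian_eq_iteratedFDeriv_stdOrthonormalBasis]
  simp only [iteratedFDeriv_two_apply, hfderiv]
  rw [((hasFDerivAt_expInner e c x).smul_const (innerSL ℝ e)).fderiv]
  simp only [Matrix.cons_val_zero, ContinuousLinearMap.smulRight_apply, smul_apply,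
    coe_innerSL_apply, smul_eq_mul, Matrix.cons_val_one, Matrix.cons_val_fin_one]
  rw [← real_inner_self_eq_norm_sq, ← (stdOrthonormalBasis ℝ E).sum_inner_mul_inner e e,
    Finset.sum_mul]
  refine Finset.sum_congr rfl fun i _ => ?_
  rw [real_inner_comm e]
  ring

theorem neg_laplacian_add_inner_gradient_expInner_neg [FiniteDimensional ℝ E] {w : E}
    (hw : ‖w‖ < ‖e‖) (x : E) :
    -Δ (expInner e c) x + ⟪w, gradient (expInner e c) x⟫ < 0 := by
  rw [laplacian_expInner, gradient_expInner, real_inner_smul_right]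
  have hwe : ⟪w, e⟫ < ‖e‖ ^ 2 := calc
    ⟪w, e⟫ ≤ ‖w‖ * ‖e‖ := real_inner_le_norm w e
    _ < ‖e‖ * ‖e‖ := mul_lt_mul_of_pos_right hw ((norm_nonneg w).trans_lt hw)
    _ = ‖e‖ ^ 2 := (sq _).symm
  nlinarith [expInner_pos e c x]

theorem Bornology.IsBounded.exists_expInner_le_one [Nontrivial E] {s : Set E}
    (hs : Bornology.IsBounded s) (C : ℝ) :
    ∃ (e : E) (c : ℝ), C < ‖e‖ ∧ ∀ x ∈ s, expInner e c x ≤ 1 := by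
  obtain ⟨R, hR⟩ := hs.subset_closedBall 0
  obtain ⟨e, he⟩ := exists_norm_eq E (abs_nonneg C |>.trans (le_add_of_nonneg_right zero_le_one))
  refine ⟨e, -(‖e‖ * R), he ▸ (le_abs_self C).trans_lt (lt_add_one _), fun x hx => ?_⟩
  have hxR : ‖x‖ ≤ R := by simpa using hR hx
  rw [expInner, Real.exp_le_one_iff]
  nlinarith [real_inner_le_norm e x, norm_nonneg e]

end ExpInner

theorem lap_eq_laplacian {f : Euc d → ℝ} {x : Euc d} (hf : ContDiffAt ℝ 2 f x) :
    lap f x = Δ f x := by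
  have hdf : DifferentiableAt ℝ (fderiv ℝ f) x :=
    (hf.fderiv_right (m := 1) (by norm_num)).differentiableAt (by norm_num)
  rw [InnerProductSpace.laplacian_eq_iteratedFDeriv_orthonormalBasis f
    (EuclideanSpace.basisFun (Fin d) ℝ), lap]
  refine Finset.sum_congr rfl fun i _ => ?_
  rw [iteratedFDeriv_two_apply, fderiv_clm_apply hdf (differentiableAt_const _)]
  simp

namespace IsBoundedC2Domain

variable {Ω : Set (Euc d)} {ν : Euc d → Euc d}

theorem norm_normal (hΩ : IsBoundedC2Domain Ω ν) {y : Euc d} (hy : y ∈ frontier Ω) :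
    ‖ν y‖ = 1 := by
  obtain ⟨r, hr, Φ, -, hgrad, -, -, hν⟩ := hΩ.2.2.2.2 y hy
  rw [hν y ⟨hy, mem_ball_self hr⟩, norm_smul, norm_inv, norm_norm,
    inv_mul_cancel₀ (norm_ne_zero_iff.2 (hgrad y (mem_ball_self hr)))]

theorem eventually_sub_smul_normal_mem (hΩ : IsBoundedC2Domain Ω ν) {y : Euc d}
    (hy : y ∈ frontier Ω) : ∀ᶠ t in 𝓝[>] (0 : ℝ), y - t • ν y ∈ Ω := by
  obtain ⟨r, hr, Φ, hΦ, hgrad, hΩr, hfr, hν⟩ := hΩ.2.2.2.2 y hy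
  have hyr : y ∈ ball y r := mem_ball_self hr
  have hΦy : Φ y = 0 := (hfr.subset ⟨hy, hyr⟩).2
  set L : ℝ → Euc d := fun t => y - t • ν y
  have hL : HasDerivAt L (-ν y) 0 := by
    simpa [L] using ((hasDerivAt_id (0 : ℝ)).smul_const (ν y)).const_sub y
  have hL0 : L 0 = y := by simp [L]
  have hΦL : HasDerivAt (Φ ∘ L) (-‖gradient Φ y‖) 0 := by
    have hΦd := (hΦ.differentiable (by norm_num) y).hasGradientAt.hasFDerivAt
    refine ((hL0 ▸ hΦd).comp_hasDerivAt 0 hL).congr_deriv ?_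
    rw [hL0, InnerProductSpace.toDual_apply_apply, inner_neg_right, hν y ⟨hy, hyr⟩,
      real_inner_smul_right, real_inner_self_eq_norm_sq]
    field_simp
  have hsign := eventually_nhdsWithin_sign_eq_of_deriv_neg
    (hΦL.deriv ▸ neg_neg_of_pos (norm_pos_iff.2 (hgrad y hyr))) (by simp [hL0, hΦy])
  have hball : ∀ᶠ t in 𝓝 (0 : ℝ), L t ∈ ball y r :=
    hL.continuousAt.preimage_mem_nhds (by rw [hL0]; exact isOpen_ball.mem_nhds hyr)
  filter_upwards [nhdsWithin_le_nhds (hsign.and hball), self_mem_nhdsWithin]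
    with t ⟨hs, hb⟩ (ht : 0 < t)
  rw [zero_sub, Left.sign_neg, sign_pos ht, sign_eq_neg_one_iff] at hs
  have : L t ∈ Ω ∩ ball y r := by rw [hΩr]; exact ⟨hb, hs⟩
  exact this.1

theorem exists_mem_frontier_isMaxOn_inner_normal_nonneg (hΩ : IsBoundedC2Domain Ω ν)
    {u : Euc d → ℝ} {G v : Euc d → Euc d} (hu : ContinuousOn u (closure Ω))
    (hu₂ : ContDiffOn ℝ 2 u Ω) (hG : GradExt Ω u G)
    (hsub : ∀ x ∈ Ω, -Δ u x + ⟪v x, gradient u x⟫ < 0) :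
    ∃ z ∈ frontier Ω, IsMaxOn u (closure Ω) z ∧ 0 ≤ ⟪G z, ν z⟫ := by
  have hopen : IsOpen Ω := hΩ.2.1
  have hu₂' : ∀ x ∈ Ω, ContDiffAt ℝ 2 u x := fun x hx => hu₂.contDiffAt (hopen.mem_nhds hx)
  obtain ⟨z, hzcl, hmax⟩ :=
    hΩ.2.2.1.isCompact_closure.exists_isMaxOn hΩ.1.closure hu
  have hzΩ : z ∉ Ω := fun hz => by
    have hloc := hmax.isLocalMax (mem_of_superset (hopen.mem_nhds hz) subset_closure)
    have := hsub z hz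
    rw [hloc.gradient_eq_zero, inner_zero_right] at this
    linarith [hloc.laplacian_nonpos (hu₂' z hz)]
  have hz : z ∈ frontier Ω := by rw [hopen.frontier_eq]; exact ⟨hzcl, hzΩ⟩
  refine ⟨z, hz, hmax, (hmax.on_subset subset_closure).inner_nonneg_of_hasGradientAt
    (fun x hx => ?_) ((hu z hzcl).mono subset_closure) ((hG.1 z hzcl).mono subset_closure)
    (hΩ.eventually_sub_smul_normal_mem hz)⟩
  rw [hG.2 x hx]
  exact ((hu₂' x hx).differentiableAt (by norm_num)).hasGradientAt

end IsBoundedC2Domain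

theorem IsRobinEigenpair.exists_mem_frontier_isMaxOn_add_smul_expInner {Ω : Set (Euc d)}
    {ν v : Euc d → Euc d} {β lam C c δ : ℝ} {φ : Euc d → ℝ} {e : Euc d}
    (h : IsRobinEigenpair Ω ν v β lam φ) (hΩ : IsBoundedC2Domain Ω ν) (hlam : lam ≤ 0)
    (hC : ∀ x ∈ Ω, ‖v x‖ ≤ C) (hCe : C < ‖e‖) (hδ : 0 < δ) :
    ∃ z ∈ frontier Ω, IsMaxOn (φ + δ • expInner e c) (closure Ω) z ∧
      β * φ z ≤ δ * ‖e‖ * expInner e c z := by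
  obtain ⟨hφc, hφ₂, hφpos, hpde, G, hG, hrobin⟩ := h
  set g := expInner e c
  have hg₂ : ContDiff ℝ 2 g := contDiff_expInner e c
  have hφ₂' : ∀ x ∈ Ω, ContDiffAt ℝ 2 φ x := fun x hx => hφ₂.contDiffAt (hΩ.2.1.mem_nhds hx)
  have hGu : GradExt Ω (φ + δ • g) (G + δ • gradient g) := by
    refine ⟨hG.1.add ?_, fun x hx => ?_⟩
    · rw [funext (gradient_expInner e c)]
      exact ((hg₂.continuous.smul continuous_const).const_smul δ).continuousOn
    · rw [gradient_add_smul ((hφ₂' x hx).differentiableAt (by norm_num))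
        (hg₂.differentiable (by norm_num) x), ← hG.2 x hx]
      rfl
  have hsub : ∀ x ∈ Ω, -Δ (φ + δ • g) x + ⟪v x, gradient (φ + δ • g) x⟫ < 0 := fun x hx => by
    rw [neg_laplacian_add_inner_gradient_add_smul (hφ₂' x hx) hg₂.contDiffAt,
      ← lap_eq_laplacian (hφ₂' x hx), hpde x hx]
    nlinarith [hφpos x hx, neg_laplacian_add_inner_gradient_expInner_neg e c
      ((hC x hx).trans_lt hCe) x]
  obtain ⟨z, hz, hmax, hnormal⟩ := hΩ.exists_mem_frontier_isMaxOn_inner_normal_nonneg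
    (hφc.add (hg₂.continuous.continuousOn.const_smul δ)) (hφ₂.add (hg₂.contDiffOn.const_smul δ))
    hGu hsub
  refine ⟨z, hz, hmax, ?_⟩
  have heν : ⟪e, ν z⟫ ≤ ‖e‖ := by
    simpa [hΩ.norm_normal hz] using real_inner_le_norm e (ν z)
  rw [Pi.add_apply, Pi.smul_apply, gradient_expInner, inner_add_left, real_inner_smul_left,
    real_inner_smul_left] at hnormal
  nlinarith [hrobin z hz, mul_le_mul_of_nonneg_left heν (mul_pos hδ (expInner_pos e c z)).le]

theorem robin_eigenvalue_pos_general
    (d : ℕ) (hd : 1 ≤ d) (Ω : Set (Euc d)) (ν : Euc d → Euc d)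
    (hΩ : IsBoundedC2Domain Ω ν) (β : ℝ) (hβ : 0 < β)
    (v : Euc d → Euc d) (hbd : ∃ C : ℝ, ∀ x ∈ Ω, ‖v x‖ ≤ C)
    (lam : ℝ) (φ : Euc d → ℝ) (h : IsRobinEigenpair Ω ν v β lam φ) :
    0 < lam := by
  obtain ⟨C, hC⟩ := hbd
  obtain ⟨x₀, hx₀⟩ := hΩ.1
  have : Nonempty (Fin d) := ⟨⟨0, hd⟩⟩
  obtain ⟨e, c, hCe, hg₁⟩ := hΩ.2.2.1.closure.exists_expInner_le_one C
  have hφx₀ : 0 < φ x₀ := h.2.2.1 x₀ hx₀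
  obtain ⟨δ, hδ, hδβ⟩ := exists_pos_mul_lt (mul_pos hβ hφx₀) (‖e‖ + β)
  by_contra! hlam
  obtain ⟨z, hz, hmax, hφz⟩ :=
    h.exists_mem_frontier_isMaxOn_add_smul_expInner (c := c) hΩ hlam hC hCe hδ
  have hgz : expInner e c z ≤ 1 := hg₁ z (frontier_subset_closure hz)
  have hmax₀ : φ x₀ + δ * expInner e c x₀ ≤ φ z + δ * expInner e c z := hmax (subset_closure hx₀)
  have hlt : φ x₀ < φ z + δ := by
    nlinarith [mul_pos hδ (expInner_pos e c x₀), mul_le_of_le_one_right hδ.le hgz]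
  nlinarith [mul_lt_mul_of_pos_left hlt hβ,
    mul_le_of_le_one_right (mul_nonneg hδ.le (norm_nonneg e)) hgz]

/-- The Robin principal eigenvalue is positive. -/
theorem robin_eigenvalue_pos
    (d : ℕ) (hd : 1 ≤ d) (Ω : Set (Euc d)) (ν : Euc d → Euc d)
    (hΩ : IsBoundedC2Domain Ω ν) (β : ℝ) (hβ : 0 < β)
    (v : Euc d → Euc d) (hmeas : Measurable v) (hbd : ∃ C : ℝ, ∀ x ∈ Ω, ‖v x‖ ≤ C)
    (lam : ℝ) (φ : Euc d → ℝ) (h : IsRobinEigenpair Ω ν v β lam φ) :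
    0 < lam :=
  robin_eigenvalue_pos_general d hd Ω ν hΩ β hβ v hbd lam φ h
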